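/- Let n be a positive odd integer. Then |(ℤ[i]/nℤ[i])^×| is a power of 2 if and only if n is a squarefree product of Fermat primes (primes p with p - 1 a power of 2). -/

import Mathlib

/-!
Reduction modulo `n` embeds `(ℤ/n)ˣ` into `(ℤ[i]/n)ˣ`, so if the latter is a `2`-group then `φ(n)`
is a power of `2`, which for odd `n` forces `n` to be a squarefree product of Fermat primes.
Conversely, by the Chinese remainder theorem `(ℤ[i]/n)ˣ` is the product of the `(ℤ[i]/p)ˣ` for
`p ∣ n`. If `p ≡ 1 [MOD 4]` and `c² = -1` in `𝔽_p`, then `i ↦ (c, -c)` gives `ℤ[i]/p ≅ 𝔽_p × 𝔽_p`,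
with `(p - 1)²` units; if `p ≡ 3 [MOD 4]`, then `ℤ[i]/p` is a field with `p² - 1` units. For a
Fermat prime the first count is a power of `2`, and the second case only occurs for `p = 3`.
-/

open Ideal

local notation "ℤ[i]" => GaussianInt

theorem Nat.card_units_prod (M N : Type*) [Monoid M] [Monoid N] :
    Nat.card (M × N)ˣ = Nat.card Mˣ * Nat.card Nˣ := by
  rw [Nat.card_congr MulEquiv.prodUnits.toEquiv, Nat.card_prod]

theorem card_units_quotient_span_mul {R : Type*} [CommRing R] {a b : R} (h : IsCoprime a b) :
    Nat.card (R ⧸ span {a * b})ˣ = Nat.card (R ⧸ span {a})ˣ * Nat.card (R ⧸ span {b})ˣ := by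
  have e : R ⧸ span {a * b} ≃+* (R ⧸ span {a}) × (R ⧸ span {b}) :=
    (quotEquivOfEq (span_singleton_mul_span_singleton a b).symm).trans
      (quotientMulEquivQuotientProd _ _ ((isCoprime_span_singleton_iff a b).mpr h))
  rw [Nat.card_congr (Units.mapEquiv e.toMulEquiv).toEquiv, Nat.card_units_prod]

theorem card_units_quotient_span_one {R : Type*} [CommRing R] :
    Nat.card (R ⧸ span {(1 : R)})ˣ = 1 := by
  rw [span_singleton_one]
  have : Subsingleton (R ⧸ (⊤ : Ideal R)) := Ideal.Quotient.subsingleton_iff.mpr rfl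
  exact Nat.card_unique

namespace GaussianInt

theorem mk_eq_mk_iff {n : ℕ} {z w : ℤ[i]} :
    Ideal.Quotient.mk (span {(n : ℤ[i])}) z = Ideal.Quotient.mk _ w ↔
      (z.re : ZMod n) = w.re ∧ (z.im : ZMod n) = w.im := by
  rw [Ideal.Quotient.eq, mem_span_singleton, ← Int.cast_natCast, Zsqrtd.intCast_dvd,
    ZMod.intCast_eq_intCast_iff_dvd_sub, ZMod.intCast_eq_intCast_iff_dvd_sub, Zsqrtd.re_sub,
    Zsqrtd.im_sub, dvd_sub_comm, dvd_sub_comm (b := z.im)]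

theorem card_quotient_span_natCast (n : ℕ) [NeZero n] :
    Nat.card (ℤ[i] ⧸ span {(n : ℤ[i])}) = n ^ 2 := by
  let f : ZMod n × ZMod n → ℤ[i] ⧸ span {(n : ℤ[i])} :=
    fun x ↦ Ideal.Quotient.mk _ ⟨x.1.val, x.2.val⟩
  have hf : Function.Bijective f := by
    refine ⟨fun x y hxy ↦ ?_, fun z ↦ ?_⟩
    · simpa [f, mk_eq_mk_iff, Prod.ext_iff] using hxy
    · obtain ⟨w, rfl⟩ := Ideal.Quotient.mk_surjective z
      exact ⟨(w.re, w.im), by simp [f, mk_eq_mk_iff]⟩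
  rw [← Nat.card_eq_of_bijective f hf, Nat.card_prod, Nat.card_zmod, sq]

instance charP_quotient_span_natCast (n : ℕ) : CharP (ℤ[i] ⧸ span {(n : ℤ[i])}) n := by
  refine ⟨fun k ↦ ?_⟩
  rw [← map_natCast (Ideal.Quotient.mk _), ← map_zero (Ideal.Quotient.mk _), mk_eq_mk_iff]
  simp [ZMod.natCast_eq_zero_iff]

section Prime

variable {p : ℕ} [Fact p.Prime]

theorem card_units_quotient_span_natCast_of_mod_four_eq_three (hp : p % 4 = 3) :
    Nat.card (ℤ[i] ⧸ span {(p : ℤ[i])})ˣ = p ^ 2 - 1 := by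
  have : (span {(p : ℤ[i])}).IsMaximal := PrincipalIdealRing.isMaximal_of_irreducible
    (prime_of_nat_prime_of_mod_four_eq_three p hp).irreducible
  let _ := Ideal.Quotient.field (span {(p : ℤ[i])})
  rw [Nat.card_units, card_quotient_span_natCast]

theorem ker_lift_prod_lift_neg (hp : p ≠ 2) {c : ZMod p} (hc : c * c = ((-1 : ℤ) : ZMod p)) :
    RingHom.ker ((Zsqrtd.lift ⟨c, hc⟩).prod (Zsqrtd.lift ⟨-c, by rwa [neg_mul_neg]⟩)) =
      span {(p : ℤ[i])} := by
  have h2 : (2 : ZMod p) ≠ 0 := Ring.two_ne_zero (by rwa [ZMod.ringChar_zmod_n])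
  have hc0 : c ≠ 0 := by
    rintro rfl
    simp at hc
  ext z
  rw [RingHom.mem_ker, ← Ideal.Quotient.eq_zero_iff_mem, ← map_zero (Ideal.Quotient.mk _),
    mk_eq_mk_iff]
  simp only [Prod.ext_iff, RingHom.prod_apply, Zsqrtd.lift_apply_apply, Prod.fst_zero,
    Prod.snd_zero, Zsqrtd.re_zero, Zsqrtd.im_zero, Int.cast_zero]
  constructor
  · rintro ⟨h₁, h₂⟩
    have hre : 2 * (z.re : ZMod p) = 0 := by linear_combination h₁ + h₂
    have him : 2 * c * z.im = 0 := by linear_combination h₁ - h₂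
    exact ⟨(mul_eq_zero.mp hre).resolve_left h2,
      (mul_eq_zero.mp him).resolve_left (mul_ne_zero h2 hc0)⟩
  · rintro ⟨h₁, h₂⟩
    simp [h₁, h₂]

theorem card_units_quotient_span_natCast_of_mod_four_eq_one (hp : p % 4 = 1) :
    Nat.card (ℤ[i] ⧸ span {(p : ℤ[i])})ˣ = (p - 1) ^ 2 := by
  obtain ⟨c, hc⟩ := ZMod.exists_sq_eq_neg_one_iff.mpr (by omega : p % 4 ≠ 3)
  have hc' : c * c = ((-1 : ℤ) : ZMod p) := by push_cast; exact hc.symm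
  set f := (Zsqrtd.lift ⟨c, hc'⟩).prod (Zsqrtd.lift ⟨-c, by rwa [neg_mul_neg]⟩)
  have hker := ker_lift_prod_lift_neg (by omega) hc'
  have hinj : Function.Injective (f.kerLift.comp (quotEquivOfEq hker.symm).toRingHom) :=
    (RingHom.kerLift_injective f).comp (quotEquivOfEq hker.symm).injective
  have hbij := hinj.bijective_of_nat_card_le (by
    rw [card_quotient_span_natCast, Nat.card_prod, Nat.card_zmod, sq])
  rw [Nat.card_congr (Units.mapEquiv (RingEquiv.ofBijective _ hbij).toMulEquiv).toEquiv,
    Nat.card_units_prod, Nat.card_units, Nat.card_zmod, sq]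

theorem exists_card_units_eq_two_pow_of_prime (hp : p ≠ 2) {k : ℕ} (hk : p - 1 = 2 ^ k) :
    ∃ m, Nat.card (ℤ[i] ⧸ span {(p : ℤ[i])})ˣ = 2 ^ m := by
  obtain h₁ | h₃ : p % 4 = 1 ∨ p % 4 = 3 := by
    have := (Fact.out : p.Prime).eq_two_or_odd; omega
  · exact ⟨k * 2, by rw [card_units_quotient_span_natCast_of_mod_four_eq_one h₁, hk, pow_mul]⟩
  · -- `2 ^ k ≡ 2 [MOD 4]` forces `k = 1`, so `p = 3`
    have hp3 : p = 3 := by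
      rcases k with _ | _ | k
      · omega
      · omega
      · rw [pow_succ, pow_succ] at hk; omega
    exact ⟨3, by rw [card_units_quotient_span_natCast_of_mod_four_eq_three h₃, hp3]; rfl⟩

end Prime

theorem exists_card_units_eq_two_pow_of_squarefree {n : ℕ} (hn : Squarefree n) (hodd : Odd n)
    (hF : ∀ p ∈ n.primeFactors, ∃ k, p - 1 = 2 ^ k) :
    ∃ m, Nat.card (ℤ[i] ⧸ span {(n : ℤ[i])})ˣ = 2 ^ m := by
  induction n using induction_on_primes with
  | zero => exact absurd rfl hn.ne_zero
  | one => exact ⟨0, by rw [Nat.cast_one, card_units_quotient_span_one, pow_zero]⟩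
  | prime_mul p n hp ih =>
    have : Fact p.Prime := ⟨hp⟩
    obtain ⟨hp_odd, hn_odd⟩ := Nat.odd_mul.mp hodd
    have hp2 : p ≠ 2 := by
      rintro rfl
      exact absurd hp_odd (by norm_num)
    have hcop : IsCoprime (p : ℤ[i]) n := by
      simpa using (Nat.isCoprime_iff_coprime.mpr (Nat.coprime_of_squarefree_mul hn)).map
        (Int.castRingHom ℤ[i])
    obtain ⟨k, hk⟩ := hF p (Nat.mem_primeFactors.mpr ⟨hp, dvd_mul_right p n, hn.ne_zero⟩)
    obtain ⟨i, hi⟩ := exists_card_units_eq_two_pow_of_prime hp2 hk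
    obtain ⟨j, hj⟩ := ih hn.of_mul_right hn_odd fun q hq ↦
      hF q (Nat.primeFactors_mono (dvd_mul_left n p) hn.ne_zero hq)
    exact ⟨i + j, by rw [Nat.cast_mul, card_units_quotient_span_mul hcop, hi, hj, pow_add]⟩

theorem exists_totient_eq_two_pow {n : ℕ} [NeZero n] {k : ℕ}
    (hk : Nat.card (ℤ[i] ⧸ span {(n : ℤ[i])})ˣ = 2 ^ k) : ∃ j, n.totient = 2 ^ j := by
  have : Finite (ℤ[i] ⧸ span {(n : ℤ[i])})ˣ := Nat.finite_of_card_ne_zero (by simp [hk])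
  have hdvd : n.totient ∣ 2 ^ k := by
    rw [← ZMod.card_units_eq_totient, ← Nat.card_eq_fintype_card, ← hk]
    exact Subgroup.card_dvd_of_injective _
      (Units.map_injective (ZMod.castHom_injective (ℤ[i] ⧸ span {(n : ℤ[i])})))
  obtain ⟨j, -, hj⟩ := (Nat.dvd_prime_pow Nat.prime_two).mp hdvd
  exact ⟨j, hj⟩

end GaussianInt

namespace Nat

theorem squarefree_of_odd_of_totient_eq_two_pow {n j : ℕ} (hn : Odd n) (h : φ n = 2 ^ j) :
    Squarefree n := by
  rw [squarefree_iff_prime_squarefree]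
  rintro p hp ⟨m, rfl⟩
  have hpφ : p ∣ 2 ^ j := by
    rw [← h, mul_assoc, totient_mul_of_prime_of_dvd hp (dvd_mul_right p m)]
    exact dvd_mul_right _ _
  have hp2 : p = 2 := (prime_dvd_prime_iff_eq hp prime_two).mp (hp.dvd_of_dvd_pow hpφ)
  subst hp2
  exact absurd (odd_iff.mp hn) (by omega)

theorem exists_sub_one_eq_two_pow_of_totient_eq_two_pow {n j p : ℕ} (h : φ n = 2 ^ j)
    (hp : p ∈ n.primeFactors) : ∃ k, p - 1 = 2 ^ k := by
  have hdvd : p - 1 ∣ 2 ^ j := by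
    rw [← h, ← totient_prime (prime_of_mem_primeFactors hp)]
    exact totient_dvd_of_dvd (dvd_of_mem_primeFactors hp)
  obtain ⟨k, -, hk⟩ := (dvd_prime_pow prime_two).mp hdvd
  exact ⟨k, hk⟩

end Nat

theorem stmt_7_general (n : ℕ) (hodd : Odd n) :
    (∃ k : ℕ, Nat.card (GaussianInt ⧸ Ideal.span {(n : GaussianInt)})ˣ = 2 ^ k) ↔
      Squarefree n ∧ ∀ p ∈ n.primeFactors, ∃ k : ℕ, p - 1 = 2 ^ k := by
  refine ⟨fun ⟨k, hk⟩ ↦ ?_, fun ⟨hn, hF⟩ ↦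
    GaussianInt.exists_card_units_eq_two_pow_of_squarefree hn hodd hF⟩
  have : NeZero n := ⟨hodd.pos.ne'⟩
  obtain ⟨j, hj⟩ := GaussianInt.exists_totient_eq_two_pow hk
  exact ⟨Nat.squarefree_of_odd_of_totient_eq_two_pow hodd hj,
    fun p hp ↦ Nat.exists_sub_one_eq_two_pow_of_totient_eq_two_pow hj hp⟩

theorem stmt_7 (n : ℕ) (hn : 0 < n) (hodd : Odd n) :
    (∃ k : ℕ, Nat.card (GaussianInt ⧸ Ideal.span {(n : GaussianInt)})ˣ = 2 ^ k) ↔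
      Squarefree n ∧ ∀ p ∈ n.primeFactors, ∃ k : ℕ, p - 1 = 2 ^ k :=
  stmt_7_general n hodd
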